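/- The formal power series identity exp(∑_{n≥1} (∑_{d|n} d·c_d) t^n / n) = ∏_{d≥1} (1 - t^d)^{-c_d} holds, where (c_d) is any sequence of nonnegative integers such that for each n only finitely many d ≤ n have c_d ≠ 0. -/

import Mathlib

/-!
Write `L_d = ∑_{k ≥ 1} t^{dk} / k = -log (1 - t^d)`. The series inside the exponential is
`∑_d c_d L_d`, and its coefficients up to `tⁿ` only see the terms with `d ≤ n`. So the identity
reduces to two facts: `expPS` turns sums into products, and `expPS L_d = (1 - t^d)⁻¹`. Both follow
from uniqueness for the equation `g' = g f'`, `g(0) = 1`, which `expPS f` solves by the chain rule,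
being `exp` composed with `f`.
-/

open PowerSeries Finset

noncomputable def expPS (f : PowerSeries ℚ) : PowerSeries ℚ :=
  PowerSeries.mk fun n =>
    PowerSeries.coeff n (∑ k ∈ Finset.range (n + 1), (k.factorial : ℚ)⁻¹ • f ^ k)

theorem expPS_eq_subst_exp {f : ℚ⟦X⟧} (hf : constantCoeff f = 0) :
    expPS f = (exp ℚ).subst f := by
  ext n
  rw [coeff_subst' (.of_constantCoeff_zero' hf),
    finsum_eq_sum_of_support_subset (s := range (n + 1))]
  · simp [expPS, map_sum]
  · intro k hk
    by_contra hkn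
    have hlt : (n : ℕ∞) < order (f ^ k) :=
      (by simpa using hkn : (n : ℕ∞) < k).trans_le (le_order_pow_of_constantCoeff_eq_zero k hf)
    exact hk (by simp only [coeff_of_lt_order n hlt, smul_zero])

theorem constantCoeff_expPS (f : ℚ⟦X⟧) : constantCoeff (expPS f) = 1 := by
  rw [← coeff_zero_eq_constantCoeff_apply, expPS, coeff_mk]
  simp

theorem derivative_expPS {f : ℚ⟦X⟧} (hf : constantCoeff f = 0) :
    d⁄dX ℚ (expPS f) = expPS f * d⁄dX ℚ f := by
  rw [expPS_eq_subst_exp hf, derivative_subst (.of_constantCoeff_zero' hf), derivative_exp]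

theorem eq_expPS_of_derivative_eq {f g : ℚ⟦X⟧} (hf : constantCoeff f = 0)
    (hg : constantCoeff g = 1) (hd : d⁄dX ℚ g = g * d⁄dX ℚ f) : g = expPS f := by
  set E := expPS f
  have hEinv : E⁻¹ * E = 1 := PowerSeries.inv_mul_cancel E (by simp [E, constantCoeff_expPS])
  have hquot : g * E⁻¹ = 1 := by
    refine derivative.ext ?_ (by simp [E, hg, constantCoeff_expPS])
    rw [Derivation.leibniz, derivative_inv', derivative_expPS hf, hd, derivative_one]
    linear_combination (norm := skip) (-g * E⁻¹ * d⁄dX ℚ f) * hEinv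
    simp only [smul_eq_mul]
    ring
  calc g = g * E⁻¹ * E := by rw [mul_assoc, hEinv, mul_one]
    _ = E := by rw [hquot, one_mul]

theorem expPS_add {f g : ℚ⟦X⟧} (hf : constantCoeff f = 0) (hg : constantCoeff g = 0) :
    expPS (f + g) = expPS f * expPS g := by
  refine (eq_expPS_of_derivative_eq (by simp [hf, hg]) (by simp [constantCoeff_expPS]) ?_).symm
  rw [Derivation.leibniz, derivative_expPS hf, derivative_expPS hg, map_add, smul_eq_mul,
    smul_eq_mul]
  ring

theorem expPS_zero : expPS 0 = 1 :=
  (eq_expPS_of_derivative_eq (map_zero _) (map_one _) (by simp)).symm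

theorem expPS_sum {ι : Type*} (s : Finset ι) {f : ι → ℚ⟦X⟧}
    (hf : ∀ i ∈ s, constantCoeff (f i) = 0) :
    expPS (∑ i ∈ s, f i) = ∏ i ∈ s, expPS (f i) := by
  induction s using Finset.cons_induction with
  | empty => simpa using expPS_zero
  | cons a s ha ih =>
    have hs : ∀ i ∈ s, constantCoeff (f i) = 0 := fun i hi => hf i (mem_cons_of_mem hi)
    have hsum : constantCoeff (∑ i ∈ s, f i) = 0 := by rw [map_sum]; exact sum_eq_zero hs
    rw [sum_cons, prod_cons, expPS_add (hf a (mem_cons_self a s)) hsum, ih hs]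

theorem expPS_nsmul {f : ℚ⟦X⟧} (hf : constantCoeff f = 0) (k : ℕ) :
    expPS (k • f) = expPS f ^ k := by
  simpa using expPS_sum (range k) (f := fun _ => f) (by simp [hf])

theorem coeff_expPS_congr {f g : ℚ⟦X⟧} {n : ℕ} (h : trunc (n + 1) f = trunc (n + 1) g) :
    coeff n (expPS f) = coeff n (expPS g) := by
  have hpow (k : ℕ) : coeff n (f ^ k) = coeff n (g ^ k) := by
    rw [← coeff_coe_trunc_of_lt n.lt_succ_self, ← trunc_trunc_pow, h, trunc_trunc_pow,
      coeff_coe_trunc_of_lt n.lt_succ_self]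
  simp [expPS, map_sum, hpow]

/-- `-log (1 - X^d) = ∑_{k ≥ 1} X^{dk} / k`; the constant coefficient is the junk value
`d / 0 = 0`. -/
noncomputable def negLogOneSubXPow (d : ℕ) : ℚ⟦X⟧ :=
  mk fun m => if d ∣ m then (d : ℚ) / m else 0

theorem constantCoeff_negLogOneSubXPow (d : ℕ) : constantCoeff (negLogOneSubXPow d) = 0 := by
  simp [negLogOneSubXPow, ← coeff_zero_eq_constantCoeff_apply]

theorem coeff_derivative_negLogOneSubXPow (d m : ℕ) :
    coeff m (d⁄dX ℚ (negLogOneSubXPow d)) = if d ∣ m + 1 then (d : ℚ) else 0 := by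
  rw [coeff_derivative, negLogOneSubXPow, coeff_mk]
  split_ifs
  · push_cast
    field_simp
  · rw [zero_mul]

theorem one_sub_X_pow_mul_derivative_negLogOneSubXPow {d : ℕ} (hd : 0 < d) :
    (1 - X ^ d) * d⁄dX ℚ (negLogOneSubXPow d) = d⁄dX ℚ (X ^ d) := by
  ext m
  rw [derivative_pow, derivative_X, mul_one, ← map_natCast C, sub_mul, one_mul, map_sub,
    coeff_X_pow_mul', coeff_C_mul_X_pow, coeff_derivative_negLogOneSubXPow]
  by_cases hm : d ≤ m
  · have hdvd : d ∣ m - d + 1 ↔ d ∣ m + 1 := by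
      rw [show m + 1 = m - d + 1 + d by omega, Nat.dvd_add_self_right]
    rw [if_pos hm, coeff_derivative_negLogOneSubXPow, if_congr hdvd rfl rfl, sub_self,
      if_neg (by omega)]
  · have hdvd : d ∣ m + 1 ↔ m = d - 1 :=
      ⟨fun h => by have := Nat.le_of_dvd m.succ_pos h; omega,
        fun h => by rw [h, Nat.sub_add_cancel hd]⟩
    rw [if_neg hm, sub_zero, if_congr hdvd rfl rfl]

theorem expPS_negLogOneSubXPow {d : ℕ} (hd : 0 < d) :
    expPS (negLogOneSubXPow d) = (1 - X ^ d)⁻¹ := by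
  have hunit : constantCoeff (1 - X ^ d : ℚ⟦X⟧) = 1 := by simp [hd.ne']
  have hinv : (1 - X ^ d : ℚ⟦X⟧)⁻¹ * (1 - X ^ d) = 1 :=
    PowerSeries.inv_mul_cancel _ (by simp [hunit])
  refine (eq_expPS_of_derivative_eq (constantCoeff_negLogOneSubXPow d)
    (by simp [constantCoeff_inv, hunit]) ?_).symm
  rw [derivative_inv', map_sub, derivative_one,
    ← one_sub_X_pow_mul_derivative_negLogOneSubXPow hd]
  linear_combination (norm := skip)
    ((1 - X ^ d : ℚ⟦X⟧)⁻¹ * d⁄dX ℚ (negLogOneSubXPow d)) * hinv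
  ring

theorem filter_dvd_Icc_eq_divisors {m n : ℕ} (hm : m ≠ 0) (hmn : m ≤ n) :
    {d ∈ Icc 1 n | d ∣ m} = m.divisors := by
  ext d
  simp only [mem_filter, mem_Icc, Nat.mem_divisors]
  exact ⟨fun ⟨_, h⟩ => ⟨h, hm⟩, fun ⟨h, _⟩ =>
    ⟨⟨Nat.pos_of_dvd_of_pos h (Nat.pos_of_ne_zero hm),
      (Nat.le_of_dvd (Nat.pos_of_ne_zero hm) h).trans hmn⟩, h⟩⟩

noncomputable def divisorSumSeries (c : ℕ → ℕ) : ℚ⟦X⟧ :=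
  mk fun m => if m = 0 then 0 else ((∑ d ∈ m.divisors, d * c d : ℕ) : ℚ) / m

theorem trunc_divisorSumSeries (c : ℕ → ℕ) (n : ℕ) :
    trunc (n + 1) (divisorSumSeries c) =
      trunc (n + 1) (∑ d ∈ Icc 1 n, c d • negLogOneSubXPow d) := by
  ext m
  rw [coeff_trunc, coeff_trunc]
  split_ifs with hmn
  · simp only [map_sum, map_nsmul]
    simp only [divisorSumSeries, negLogOneSubXPow, coeff_mk, nsmul_eq_mul, mul_ite, mul_zero]
    rw [← sum_filter]
    rcases eq_or_ne m 0 with rfl | hm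
    · simp
    · rw [if_neg hm, filter_dvd_Icc_eq_divisors hm (by omega), Nat.cast_sum, sum_div]
      refine sum_congr rfl fun d _ => ?_
      push_cast
      ring
  · rfl

theorem exp_eq_euler_product_general (c : ℕ → ℕ) :
    ∀ n : ℕ,
      PowerSeries.coeff n (expPS (PowerSeries.mk fun m =>
          if m = 0 then 0 else ((∑ d ∈ m.divisors, d * c d : ℕ) : ℚ) / m)) =
        PowerSeries.coeff n
          (∏ d ∈ Finset.Icc 1 n, ((1 - PowerSeries.X ^ d : PowerSeries ℚ)⁻¹) ^ c d) := by
  intro n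
  have hlog (d : ℕ) : constantCoeff (c d • negLogOneSubXPow d) = 0 := by
    rw [map_nsmul, constantCoeff_negLogOneSubXPow, smul_zero]
  rw [show (mk fun m => _) = divisorSumSeries c from rfl,
    coeff_expPS_congr (trunc_divisorSumSeries c n), expPS_sum _ fun d _ => hlog d]
  refine congrArg (coeff n) (prod_congr rfl fun d hd => ?_)
  rw [expPS_nsmul (constantCoeff_negLogOneSubXPow d),
    expPS_negLogOneSubXPow (mem_Icc.mp hd).1]

/-- `exp (∑_{n ≥ 1} (∑_{d ∣ n} d c_d) tⁿ/n) = ∏_{d ≥ 1} (1 - t^d)^{-c_d}`, the infinite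
product being interpreted coefficientwise (only factors with `d ≤ n` contribute to the
coefficient of `tⁿ`). -/
theorem exp_eq_euler_product (c : ℕ → ℕ)
    (hfin : ∀ n : ℕ, {d : ℕ | d ≤ n ∧ c d ≠ 0}.Finite) :
    ∀ n : ℕ,
      PowerSeries.coeff n (expPS (PowerSeries.mk fun m =>
          if m = 0 then 0 else ((∑ d ∈ m.divisors, d * c d : ℕ) : ℚ) / m)) =
        PowerSeries.coeff n
          (∏ d ∈ Finset.Icc 1 n, ((1 - PowerSeries.X ^ d : PowerSeries ℚ)⁻¹) ^ c d) :=
  exp_eq_euler_product_general c
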